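/- Let V be a real inner product space and vⁿ⁺¹, vⁿ, vⁿ⁻¹ ∈ V. Then ⟨(3/2)vⁿ⁺¹ - 2vⁿ + (1/2)vⁿ⁻¹, vⁿ⁺¹⟩ = (1/2)(‖pⁿ⁺¹‖_G² - ‖pⁿ‖_G²) + (1/4)‖vⁿ⁺¹ - 2vⁿ + vⁿ⁻¹‖², where pⁿ⁺¹ = (vⁿ, vⁿ⁺¹), pⁿ = (vⁿ⁻¹, vⁿ), and ‖(u,v)‖_G² = (1/2)‖u‖² - 2⟨u,v⟩ + (5/2)‖v‖². -/
import Mathlib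


open scoped RealInnerProductSpace

theorem bdf2_G_norm_identity {V : Type*} [NormedAddCommGroup V] [InnerProductSpace ℝ V]
    (v2 v1 v0 : V) :
    ⟪(3/2 : ℝ) • v2 - (2 : ℝ) • v1 + (1/2 : ℝ) • v0, v2⟫ =
      (1/2) * (((1/2) * ‖v1‖ ^ 2 - 2 * ⟪v1, v2⟫ + (5/2) * ‖v2‖ ^ 2)
        - ((1/2) * ‖v0‖ ^ 2 - 2 * ⟪v0, v1⟫ + (5/2) * ‖v1‖ ^ 2))
      + (1/4) * ‖v2 - (2 : ℝ) • v1 + v0‖ ^ 2 := by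
  simp only [← real_inner_self_eq_norm_sq, inner_add_add_self, inner_sub_sub_self,
    inner_add_left, inner_add_right, inner_sub_left, inner_sub_right, inner_smul_left,
    inner_smul_right, RCLike.conj_to_real, real_inner_comm v1 v0, real_inner_comm v2 v0,
    real_inner_comm v2 v1]
  ring
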